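/- Let n be composite, k a divisor of n with 2 ≤ k ≤ n-1, and m a divisor of n/k with 2 ≤ m ≤ n/k - 1. Then the integral circulant graph ICG_n(D) with D = {d ∈ D_n : k ∤ d} ∪ {km·d' : d' ∈ D_{n/(km)}} has spectrum {(n - n/k + n/(km) - 1)^(1), (n/(km) - 1)^(km-k), (-n/k + n/(km) - 1)^(k-1), (-1)^(n-mk)}; in particular it has exactly four distinct eigenvalues. -/

import Mathlib

/-!
The adjacency matrix of `ICG_n(D)` is the circulant matrix of `y ↦ [y ≠ 0 ∧ gcd(y, n) ∈ D]`, so it is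
diagonalised by the Fourier matrix `(ζ^{ij})` and its eigenvalues are the discrete Fourier
coefficients of that symbol. For the divisor set `D` of the theorem the symbol is
`1 - [k ∣ y] + [km ∣ y] - [y = 0]`, and the Fourier coefficient of `[d ∣ y]` at `j` is
`(n/d)·[n/d ∣ j]`. Hence `λ_j = n[j = 0] - (n/k)[n/k ∣ j] + (n/km)[n/km ∣ j] - 1`, which takes
four values on the nested sets `{0} ⊆ (n/k)ℤ_n ⊆ (n/km)ℤ_n ⊆ ℤ_n` of sizes `1, k, km, n`.
-/

open Polynomial
open scoped Classical

/-- The integral circulant graph `ICG_n(D)`. -/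
def ICG (n : ℕ) (D : Set ℕ) : SimpleGraph (ZMod n) :=
  SimpleGraph.fromRel (fun a b => Nat.gcd (a - b).val n ∈ D)

/-- The adjacency matrix of a graph, over `ℂ`. -/
noncomputable def adjMat {V : Type*} [Fintype V] (G : SimpleGraph V) : Matrix V V ℂ :=
  Matrix.of fun i j => if G.Adj i j then 1 else 0

open Matrix Finset ZMod

namespace ZMod

variable {n : ℕ} [NeZero n]

lemma sum_stdAddChar_mul (t : ZMod n) :
    ∑ x : ZMod n, stdAddChar (x * t) = if t = 0 then (n : ℂ) else 0 := by
  rw [AddChar.sum_mulShift t (isPrimitive_stdAddChar n), ZMod.card, Nat.cast_ite, Nat.cast_zero]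

lemma stdAddChar_matrix_mul_inv :
    (of fun i j : ZMod n => stdAddChar (i * j)) *
      ((n : ℂ)⁻¹ • of fun i j : ZMod n => stdAddChar (-(i * j))) = 1 := by
  ext i j
  have h (l : ZMod n) : i * l + -(l * j) = l * (i - j) := by ring
  rw [Matrix.mul_smul, Matrix.smul_apply, mul_apply]
  simp_rw [of_apply, ← AddChar.map_add_eq_mul, h, sum_stdAddChar_mul, sub_eq_zero, one_apply]
  split_ifs <;> simp

variable (n) in
noncomputable def fourierMatrix : (Matrix (ZMod n) (ZMod n) ℂ)ˣ :=
  ⟨_, _, stdAddChar_matrix_mul_inv, mul_eq_one_comm.mp stdAddChar_matrix_mul_inv⟩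

lemma circulant_mul_fourierMatrix (v : ZMod n → ℂ) :
    circulant v * fourierMatrix n = fourierMatrix n * diagonal (𝓕 v) := by
  ext i j
  rw [mul_diagonal, mul_apply, dft_apply, mul_sum]
  simp only [fourierMatrix, circulant_apply, of_apply, smul_eq_mul]
  refine Fintype.sum_equiv (Equiv.subLeft i) _ _ fun x => ?_
  have h : x * j = i * j + -((i - x) * j) := by ring
  rw [Equiv.subLeft_apply, h, AddChar.map_add_eq_mul]
  ring

theorem charpoly_circulant (v : ZMod n → ℂ) :
    (circulant v).charpoly = ∏ j, (X - C (𝓕 v j)) := by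
  have h : circulant v = fourierMatrix n * diagonal (𝓕 v) * (fourierMatrix n).val⁻¹ := by
    rw [← circulant_mul_fourierMatrix, ← coe_units_inv, mul_assoc, Units.mul_inv, mul_one]
  rw [h, charpoly_units_conj, charpoly_diagonal]

lemma sum_ite_dvd_val {M : Type*} [AddCommMonoid M] {d : ℕ} (hd : d ∣ n) (g : ZMod n → M) :
    ∑ y : ZMod n, (if d ∣ y.val then g y else 0) = ∑ t ∈ range (n / d), g (d * t : ℕ) := by
  have hd0 : 0 < d := Nat.pos_of_dvd_of_pos hd (NeZero.pos n)
  have hval {t : ℕ} (ht : t < n / d) : ((d * t : ℕ) : ZMod n).val = d * t :=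
    val_cast_of_lt ((Nat.lt_div_iff_mul_lt' hd t).mp ht)
  rw [← sum_filter]
  refine sum_nbij' (fun y => y.val / d) (fun t : ℕ => ((d * t : ℕ) : ZMod n))
    (fun y hy => ?_) (fun t ht => ?_) (fun y hy => ?_) (fun t ht => ?_) (fun y hy => ?_)
  · exact mem_range.mpr (Nat.div_lt_div_of_lt_of_dvd hd y.val_lt)
  · rw [mem_filter, hval (mem_range.mp ht)]
    exact ⟨mem_univ _, dvd_mul_right d t⟩
  · rw [Nat.mul_div_cancel' (mem_filter.mp hy).2, natCast_zmod_val]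
  · rw [hval (mem_range.mp ht), Nat.mul_div_cancel_left t hd0]
  · rw [Nat.mul_div_cancel' (mem_filter.mp hy).2, natCast_zmod_val]

lemma card_filter_dvd_val {d : ℕ} (hd : d ∣ n) : #{y : ZMod n | d ∣ y.val} = n / d := by
  rw [card_filter, sum_ite_dvd_val hd, sum_const, card_range, smul_eq_mul, mul_one]

lemma natCast_mul_eq_zero_iff {d : ℕ} (hd : d ∣ n) (j : ZMod n) :
    (d : ZMod n) * j = 0 ↔ n / d ∣ j.val := by
  have hd0 : 0 < d := Nat.pos_of_dvd_of_pos hd (NeZero.pos n)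
  have h := Nat.mul_dvd_mul_iff_left (b := n / d) (c := j.val) hd0
  rw [Nat.mul_div_cancel' hd] at h
  rw [← h, ← natCast_zmod_val j, ← Nat.cast_mul, natCast_eq_zero_iff, val_natCast_of_lt j.val_lt]

variable (n) in
def dvdIndicator (d : ℕ) : ZMod n → ℂ := fun y => if d ∣ y.val then 1 else 0

lemma dft_dvdIndicator {d : ℕ} (hd : d ∣ n) (j : ZMod n) :
    𝓕 (dvdIndicator n d) j = if n / d ∣ j.val then ((n / d : ℕ) : ℂ) else 0 := by
  set w := stdAddChar (-((d : ZMod n) * j))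
  have hterm (t : ℕ) : stdAddChar (-(((d * t : ℕ) : ZMod n) * j)) = w ^ t := by
    rw [← AddChar.map_nsmul_eq_pow, nsmul_eq_mul]
    push_cast
    ring_nf
  have hw : w = 1 ↔ n / d ∣ j.val := by
    rw [← natCast_mul_eq_zero_iff hd, ← neg_eq_zero, ← injective_stdAddChar.eq_iff,
      AddChar.map_zero_eq_one]
  have hw_pow : w ^ (n / d) = 1 := by
    rw [← AddChar.map_nsmul_eq_pow, nsmul_eq_mul, ← mul_neg, ← mul_assoc, ← Nat.cast_mul,
      Nat.div_mul_cancel hd, natCast_self, zero_mul, AddChar.map_zero_eq_one]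
  simp only [dft_apply, dvdIndicator, smul_eq_mul, mul_ite, mul_one, mul_zero]
  rw [sum_ite_dvd_val hd]
  simp only [hterm]
  split_ifs with h
  · simp [hw.mpr h]
  · rw [geom_sum_eq (mt hw.mp h), hw_pow, sub_self, zero_div]

lemma dvd_val_iff_eq_zero (j : ZMod n) : n ∣ j.val ↔ j = 0 :=
  ⟨fun h => (val_eq_zero j).mp (Nat.eq_zero_of_dvd_of_lt h j.val_lt),
    fun h => h ▸ val_zero (n := n) ▸ dvd_zero n⟩

lemma dvd_val_neg_iff {d : ℕ} (hd : d ∣ n) (x : ZMod n) : d ∣ (-x).val ↔ d ∣ x.val := by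
  rw [neg_val]
  split_ifs with hx
  · simp [hx]
  · exact Nat.dvd_sub_iff_right x.val_lt.le hd

lemma gcd_val_neg (x : ZMod n) : Nat.gcd (-x).val n = Nat.gcd x.val n :=
  Nat.dvd_antisymm
    (Nat.dvd_gcd ((dvd_val_neg_iff (Nat.gcd_dvd_right _ _) x).mp (Nat.gcd_dvd_left _ _))
      (Nat.gcd_dvd_right _ _))
    (Nat.dvd_gcd ((dvd_val_neg_iff (Nat.gcd_dvd_right _ _) x).mpr (Nat.gcd_dvd_left _ _))
      (Nat.gcd_dvd_right _ _))

end ZMod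

section ICG

variable {n : ℕ} [NeZero n]

lemma ICG_adj_iff {D : Set ℕ} {a b : ZMod n} :
    (ICG n D).Adj a b ↔ a ≠ b ∧ Nat.gcd (a - b).val n ∈ D := by
  rw [ICG, SimpleGraph.fromRel_adj, ← neg_sub a b, gcd_val_neg, or_self]

lemma adjMat_ICG (D : Set ℕ) :
    adjMat (ICG n D) = circulant fun y => if y ≠ 0 ∧ Nat.gcd y.val n ∈ D then 1 else 0 := by
  ext a b
  simp only [adjMat, of_apply, circulant_apply, ICG_adj_iff, ne_eq, sub_eq_zero]

end ICG

lemma Nat.div_mul_dvd_div {n k m : ℕ} (hkm : k * m ∣ n) : n / (k * m) ∣ n / k := by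
  rw [← Nat.div_div_eq_div_mul]
  exact Nat.div_dvd_of_dvd (Nat.dvd_div_of_mul_dvd hkm)

lemma prod_eq_prod_filter_mul_pow {ι M : Type*} [CommMonoid M] {s : Finset ι} (p : ι → Prop)
    [DecidablePred p] {f : ι → M} {c : M} (h : ∀ i ∈ s, ¬ p i → f i = c) :
    ∏ i ∈ s, f i = (∏ i ∈ s with p i, f i) * c ^ (#s - #{i ∈ s | p i}) := by
  rw [← prod_filter_mul_prod_filter_not s p,
    prod_congr rfl fun i hi => h i (mem_filter.mp hi).1 (mem_filter.mp hi).2, prod_const,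
    ← card_filter_add_card_filter_not (s := s) p, Nat.add_sub_cancel_left]

lemma spectrum_eq_of_charpoly_eq {ι K : Type*} [Fintype ι] [DecidableEq ι] [Field K]
    {A : Matrix ι ι K} {a b c d : K} {q r s : ℕ} (hq : q ≠ 0) (hr : r ≠ 0) (hs : s ≠ 0)
    (h : A.charpoly = (X - C a) * (X - C b) ^ q * (X - C c) ^ r * (X - C d) ^ s) :
    spectrum K A = {a, b, c, d} := by
  ext μ
  simp [mem_spectrum_iff_isRoot_charpoly, h, sub_eq_zero, hq, hr, hs, or_assoc]

lemma Set.ncard_eq_four_of_nodup {α : Type*} {a b c d : α} (h : [a, b, c, d].Nodup) :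
    ({a, b, c, d} : Set α).ncard = 4 := by
  rw [show ({a, b, c, d} : Set α) = ↑[a, b, c, d].toFinset by ext; simp, Set.ncard_coe_finset,
    List.toFinset_card_of_nodup h]
  rfl

section NestedDivisorSet

variable {n k m : ℕ}

def nestedDivisorSet (n k m : ℕ) : Set ℕ :=
  {d | (d ∣ n ∧ d ≠ n) ∧ ¬ k ∣ d} ∪
    {e | ∃ d' : ℕ, (d' ∣ n / (k * m) ∧ d' ≠ n / (k * m)) ∧ e = k * m * d'}

lemma gcd_mem_nestedDivisorSet_iff (hkm : k * m ∣ n) {v : ℕ} (hv : 0 < v) (hvn : v < n) :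
    Nat.gcd v n ∈ nestedDivisorSet n k m ↔ ¬ k ∣ v ∨ k * m ∣ v := by
  have hgn : Nat.gcd v n ∣ n := Nat.gcd_dvd_right v n
  have hgv : Nat.gcd v n ∣ v := Nat.gcd_dvd_left v n
  have hg_ne : Nat.gcd v n ≠ n := fun h => absurd (Nat.le_of_dvd hv (h ▸ hgv)) (not_le.mpr hvn)
  constructor
  · rintro (⟨-, hkg⟩ | ⟨d', -, hgd⟩)
    · exact Or.inl fun hkv => hkg (Nat.dvd_gcd hkv ((dvd_mul_right k m).trans hkm))
    · exact Or.inr ((Dvd.intro d' hgd.symm).trans hgv)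
  · rintro (hkv | hkmv)
    · exact Or.inl ⟨⟨hgn, hg_ne⟩, fun hkg => hkv (hkg.trans hgv)⟩
    · have hkmg : k * m ∣ Nat.gcd v n := Nat.dvd_gcd hkmv hkm
      refine Or.inr ⟨Nat.gcd v n / (k * m), ⟨Nat.div_dvd_div hkmg hgn, fun h => hg_ne ?_⟩,
        (Nat.mul_div_cancel' hkmg).symm⟩
      rw [← Nat.div_mul_cancel hkmg, h, Nat.div_mul_cancel hkm]

lemma adjMat_ICG_nestedDivisorSet [NeZero n] (hkm : k * m ∣ n) :
    adjMat (ICG n (nestedDivisorSet n k m)) = circulant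
      (dvdIndicator n 1 - dvdIndicator n k + dvdIndicator n (k * m) - dvdIndicator n n) := by
  rw [adjMat_ICG]
  congr 1
  funext y
  simp only [Pi.sub_apply, Pi.add_apply, dvdIndicator, one_dvd, if_true]
  by_cases hy : y = 0
  · simp [hy]
  · have hv : 0 < y.val := val_pos.mpr hy
    rw [if_neg ((dvd_val_iff_eq_zero y).not.mpr hy)]
    simp only [hy, ne_eq, not_false_eq_true, true_and,
      gcd_mem_nestedDivisorSet_iff hkm hv y.val_lt]
    by_cases hk : k ∣ y.val <;> by_cases hkmy : k * m ∣ y.val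
    all_goals simp [hk, hkmy]
    exact hk ((dvd_mul_right k m).trans hkmy)

def nestedEigenvalue (n k m : ℕ) (j : ZMod n) : ℂ :=
  (if j = 0 then (n : ℂ) else 0) - (if n / k ∣ j.val then ((n / k : ℕ) : ℂ) else 0)
    + (if n / (k * m) ∣ j.val then ((n / (k * m) : ℕ) : ℂ) else 0) - 1

lemma dft_nestedSymbol [NeZero n] (hkm : k * m ∣ n) :
    𝓕 (dvdIndicator n 1 - dvdIndicator n k + dvdIndicator n (k * m) - dvdIndicator n n) =
      nestedEigenvalue n k m := by
  funext j
  simp only [map_sub, map_add, Pi.sub_apply, Pi.add_apply, dft_dvdIndicator (one_dvd n),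
    dft_dvdIndicator ((dvd_mul_right k m).trans hkm), dft_dvdIndicator hkm,
    dft_dvdIndicator (dvd_refl n), Nat.div_one, Nat.div_self (NeZero.pos n), one_dvd, if_true,
    Nat.cast_one, dvd_val_iff_eq_zero, nestedEigenvalue]

lemma nestedEigenvalue_zero [NeZero n] :
    nestedEigenvalue n k m 0 = n - ((n / k : ℕ) : ℂ) + ((n / (k * m) : ℕ) : ℂ) - 1 := by
  simp [nestedEigenvalue]

lemma nestedEigenvalue_of_dvd_of_ne_zero (hkm : k * m ∣ n) {j : ZMod n} (hj : n / k ∣ j.val)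
    (h0 : j ≠ 0) :
    nestedEigenvalue n k m j = -((n / k : ℕ) : ℂ) + ((n / (k * m) : ℕ) : ℂ) - 1 := by
  simp only [nestedEigenvalue, if_neg h0, if_pos hj,
    if_pos ((Nat.div_mul_dvd_div hkm).trans hj)]
  ring

lemma nestedEigenvalue_of_dvd_of_not_dvd {j : ZMod n} (hj : n / (k * m) ∣ j.val)
    (hj' : ¬ n / k ∣ j.val) : nestedEigenvalue n k m j = ((n / (k * m) : ℕ) : ℂ) - 1 := by
  have h0 : j ≠ 0 := by rintro rfl; simp at hj'
  simp only [nestedEigenvalue, if_neg h0, if_neg hj', if_pos hj]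
  ring

lemma nestedEigenvalue_of_not_dvd (hkm : k * m ∣ n) {j : ZMod n} (hj : ¬ n / (k * m) ∣ j.val) :
    nestedEigenvalue n k m j = -1 := by
  have hj' : ¬ n / k ∣ j.val := fun h => hj ((Nat.div_mul_dvd_div hkm).trans h)
  have h0 : j ≠ 0 := by rintro rfl; simp at hj'
  simp [nestedEigenvalue, h0, hj, hj']

theorem charpoly_adjMat_ICG_nestedDivisorSet [NeZero n] (hkm : k * m ∣ n) :
    (adjMat (ICG n (nestedDivisorSet n k m))).charpoly =
      (X - C ((n : ℂ) - ((n / k : ℕ) : ℂ) + ((n / (k * m) : ℕ) : ℂ) - 1))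
        * (X - C (((n / (k * m) : ℕ) : ℂ) - 1)) ^ (k * m - k)
        * (X - C (-((n / k : ℕ) : ℂ) + ((n / (k * m) : ℕ) : ℂ) - 1)) ^ (k - 1)
        * (X + 1) ^ (n - m * k) := by
  have hk : k ∣ n := (dvd_mul_right k m).trans hkm
  have hnk : n / k ∣ n := Nat.div_dvd_of_dvd hk
  have hP₁ : ((univ.filter fun j : ZMod n => n / (k * m) ∣ j.val).filter
      fun j => n / k ∣ j.val) = univ.filter fun j : ZMod n => n / k ∣ j.val := by
    rw [filter_filter]
    exact filter_congr fun j _ => and_iff_right_of_imp (Nat.div_mul_dvd_div hkm).trans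
  have hP₀ : ((univ.filter fun j : ZMod n => n / k ∣ j.val).filter fun j => j = 0) = {0} := by
    ext j
    simp only [mem_filter, mem_univ, true_and, mem_singleton]
    exact ⟨And.right, fun h => ⟨by simp [h], h⟩⟩
  rw [adjMat_ICG_nestedDivisorSet hkm, charpoly_circulant, dft_nestedSymbol hkm,
    prod_eq_prod_filter_mul_pow _ fun j _ hj => by rw [nestedEigenvalue_of_not_dvd hkm hj,
      map_neg, map_one, sub_neg_eq_add],
    prod_eq_prod_filter_mul_pow _ fun j hj hj' => by
      rw [nestedEigenvalue_of_dvd_of_not_dvd (mem_filter.mp hj).2 hj'],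
    hP₁, prod_eq_prod_filter_mul_pow _ fun j hj h0 => by
      rw [nestedEigenvalue_of_dvd_of_ne_zero hkm (mem_filter.mp hj).2 h0],
    hP₀, prod_singleton, nestedEigenvalue_zero, card_filter_dvd_val hnk,
    card_filter_dvd_val ((Nat.div_mul_dvd_div hkm).trans hnk), card_singleton, card_univ,
    ZMod.card, Nat.div_div_self hk (NeZero.ne n), Nat.div_div_self hkm (NeZero.ne n),
    Nat.mul_comm m k]
  ring

theorem ncard_spectrum_adjMat_ICG_nestedDivisorSet [NeZero n] (hkm : k * m ∣ n) (hk : 2 ≤ k)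
    (hm : 2 ≤ m) (hkm_lt : k * m < n) :
    (spectrum ℂ (adjMat (ICG n (nestedDivisorSet n k m)))).ncard = 4 := by
  have hnkm_pos : 0 < n / (k * m) :=
    Nat.div_pos (Nat.le_of_dvd (NeZero.pos n) hkm) (by positivity)
  have hk_lt : k < k * m := by nlinarith
  have hnkm : n / (k * m) < n / k := by
    rw [← Nat.div_div_eq_div_mul]
    exact Nat.div_lt_self (Nat.div_pos (by omega) (by omega)) (by omega)
  have hnk : n / k < n := Nat.div_lt_self (NeZero.pos n) (by omega)
  have hcharpoly := charpoly_adjMat_ICG_nestedDivisorSet hkm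
  rw [show (X + 1 : ℂ[X]) = X - C (-1) by simp] at hcharpoly
  rw [spectrum_eq_of_charpoly_eq (Nat.sub_ne_zero_of_lt hk_lt) (show k - 1 ≠ 0 by omega)
    (Nat.sub_ne_zero_of_lt (Nat.mul_comm k m ▸ hkm_lt)) hcharpoly]
  apply Set.ncard_eq_four_of_nodup
  -- over `ℤ` the eigenvalues are ordered `λ₃ < -1 < λ₂ < λ₀`, since `0 < n/km < n/k < n`
  have hz : [(n : ℤ) - (n / k : ℕ) + (n / (k * m) : ℕ) - 1, (n / (k * m) : ℕ) - 1,
      -((n / k : ℕ) : ℤ) + (n / (k * m) : ℕ) - 1, -1].Nodup := by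
    simp only [List.nodup_cons, List.mem_cons, List.not_mem_nil, or_false, List.nodup_nil,
      not_false_eq_true, and_true]
    omega
  simpa only [List.map_cons, List.map_nil, Int.cast_sub, Int.cast_add, Int.cast_neg,
    Int.cast_one, Int.cast_natCast] using hz.map (Int.cast_injective (α := ℂ))

end NestedDivisorSet

theorem stmt_18_general (n k m : ℕ) [NeZero n]
    (hk : k ∣ n) (hk2 : 2 ≤ k)
    (hm : m ∣ n / k) (hm2 : 2 ≤ m) (hm3 : m ≤ n / k - 1) :
    (adjMat (ICG n ({d | (d ∣ n ∧ d ≠ n) ∧ ¬ k ∣ d} ∪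
        {e | ∃ d' : ℕ, (d' ∣ n / (k * m) ∧ d' ≠ n / (k * m)) ∧ e = k * m * d'}))).charpoly =
        (X - C ((n : ℂ) - ((n / k : ℕ) : ℂ) + ((n / (k * m) : ℕ) : ℂ) - 1))
          * (X - C (((n / (k * m) : ℕ) : ℂ) - 1)) ^ (k * m - k)
          * (X - C (-((n / k : ℕ) : ℂ) + ((n / (k * m) : ℕ) : ℂ) - 1)) ^ (k - 1)
          * (X + 1) ^ (n - m * k)
      ∧ (spectrum ℂ (adjMat (ICG n ({d | (d ∣ n ∧ d ≠ n) ∧ ¬ k ∣ d} ∪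
          {e | ∃ d' : ℕ, (d' ∣ n / (k * m) ∧ d' ≠ n / (k * m)) ∧ e = k * m * d'})))).ncard
        = 4 := by
  have hkm : k * m ∣ n := Nat.mul_dvd_of_dvd_div hk hm
  have hkm_lt : k * m < n :=
    calc k * m < k * (n / k) := Nat.mul_lt_mul_of_pos_left (by omega) (by omega)
      _ = n := Nat.mul_div_cancel' hk
  exact ⟨charpoly_adjMat_ICG_nestedDivisorSet hkm,
    ncard_spectrum_adjMat_ICG_nestedDivisorSet hkm hk2 hm2 hkm_lt⟩

/-- let `n` be composite, `k ∣ n` with `2 ≤ k ≤ n-1`, `m ∣ n/k` with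
`2 ≤ m ≤ n/k - 1`, and `D = {d ∈ D_n : k ∤ d} ∪ km·D_{n/(km)}`. Then `ICG_n(D)` has
spectrum `{(n - n/k + n/(km) - 1)^(1), (n/(km) - 1)^(km-k), (-n/k + n/(km) - 1)^(k-1),
(-1)^(n-mk)}`; in particular exactly four distinct eigenvalues. -/
theorem stmt_18 (n k m : ℕ) [NeZero n] (hcomp : 2 ≤ n ∧ ¬ n.Prime)
    (hk : k ∣ n) (hk2 : 2 ≤ k) (hk3 : k ≤ n - 1)
    (hm : m ∣ n / k) (hm2 : 2 ≤ m) (hm3 : m ≤ n / k - 1) :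
    (adjMat (ICG n ({d | (d ∣ n ∧ d ≠ n) ∧ ¬ k ∣ d} ∪
        {e | ∃ d' : ℕ, (d' ∣ n / (k * m) ∧ d' ≠ n / (k * m)) ∧ e = k * m * d'}))).charpoly =
        (X - C ((n : ℂ) - ((n / k : ℕ) : ℂ) + ((n / (k * m) : ℕ) : ℂ) - 1))
          * (X - C (((n / (k * m) : ℕ) : ℂ) - 1)) ^ (k * m - k)
          * (X - C (-((n / k : ℕ) : ℂ) + ((n / (k * m) : ℕ) : ℂ) - 1)) ^ (k - 1)
          * (X + 1) ^ (n - m * k)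
      ∧ (spectrum ℂ (adjMat (ICG n ({d | (d ∣ n ∧ d ≠ n) ∧ ¬ k ∣ d} ∪
          {e | ∃ d' : ℕ, (d' ∣ n / (k * m) ∧ d' ≠ n / (k * m)) ∧ e = k * m * d'})))).ncard
        = 4 :=
  stmt_18_general n k m hk hk2 hm hm2 hm3
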